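/- arXiv:math/0505149 — 3 statements merged into one kernel-verified Lean document; each statement's English description precedes it below -/
import Mathlib

section
/- Let k be a field and φ : k[x,y,z,w] → k[t,z] the k-algebra homomorphism with x ↦ t², y ↦ t³, z ↦ z, w ↦ tz. Then the kernel of φ is the ideal generated by y² − x³, yz − xw, w² − xz², and x²z − yw. -/
/-!
Modulo the four relations one has y² = x³, yw = x²z and w² = xz², so every polynomial is
congruent to a normal form a(x,z) + y b(x,z) + w c(x,z). Its image under φ is
a(t², z) + t · (x b + z c)(t², z), whose even and odd parts in t are separated by the
expansion t ↦ t². So if the image vanishes then a = 0 and x b + z c = 0; by primality of z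
this forces b = z d, c = -x d, and the normal form is d · (yz - xw).
-/

open MvPolynomial

namespace Polynomial

theorem eq_zero_and_eq_zero_of_expand_two_add_X_mul_expand_two {R : Type*} [CommSemiring R]
    {p q : R[X]} (h : expand R 2 p + X * expand R 2 q = 0) : p = 0 ∧ q = 0 := by
  constructor <;> ext n
  · have := congrArg (coeff · (2 * n)) h
    rcases n with _ | n
    · simpa [coeff_expand] using this
    · rw [show 2 * (n + 1) = 2 * n + 1 + 1 by ring] at this
      simpa [coeff_expand, Nat.two_mul_odd_div_two, show (2 * n + 1 + 1) / 2 = n + 1 by omega]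
        using this
  · have := congrArg (coeff · (2 * n + 1)) h
    simpa [coeff_expand, Nat.two_mul_odd_div_two] using this

end Polynomial

namespace MvPolynomial

variable {R : Type*} [CommSemiring R] {n : ℕ}

noncomputable def squareX0 (R : Type*) [CommSemiring R] (n : ℕ) :
    MvPolynomial (Fin (n + 1)) R →ₐ[R] MvPolynomial (Fin (n + 1)) R :=
  aeval (Function.update X 0 (X 0 ^ 2))

@[simp] theorem squareX0_X_zero : squareX0 R n (X 0) = X 0 ^ 2 := by simp [squareX0]

@[simp] theorem squareX0_X_succ (i : Fin n) : squareX0 R n (X i.succ) = X i.succ := by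
  simp [squareX0, Fin.succ_ne_zero]

theorem finSuccEquiv_squareX0 (p : MvPolynomial (Fin (n + 1)) R) :
    finSuccEquiv R n (squareX0 R n p) = Polynomial.expand _ 2 (finSuccEquiv R n p) := by
  suffices ((finSuccEquiv R n).toAlgHom.comp (squareX0 R n)) =
      ((Polynomial.expand _ 2).restrictScalars R).comp (finSuccEquiv R n).toAlgHom from
    congr($this p)
  refine algHom_ext fun i ↦ Fin.cases ?_ (fun i ↦ ?_) i <;>
    simp [finSuccEquiv_X_zero, finSuccEquiv_X_succ]

theorem eq_zero_and_eq_zero_of_squareX0_add_X_mul_squareX0 {p q : MvPolynomial (Fin (n + 1)) R}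
    (h : squareX0 R n p + X 0 * squareX0 R n q = 0) : p = 0 ∧ q = 0 := by
  have := congrArg (finSuccEquiv R n) h
  simp only [map_add, map_mul, finSuccEquiv_squareX0, finSuccEquiv_X_zero, map_zero] at this
  simpa using Polynomial.eq_zero_and_eq_zero_of_expand_two_add_X_mul_expand_two this

theorem exists_eq_X_mul_of_X_mul_add_X_mul_eq_zero {σ R : Type*} [CommRing R] [IsDomain R]
    {i j : σ} (hij : i ≠ j) {p q : MvPolynomial σ R} (h : X i * p + X j * q = 0) :
    ∃ d, p = X j * d ∧ q = -(X i * d) := by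
  have hdvd : X j ∣ X i * p := ⟨-q, by linear_combination h⟩
  obtain ⟨d, rfl⟩ := (X_prime.dvd_or_dvd hdvd).resolve_left (by simpa using hij.symm)
  refine ⟨d, rfl, (isRegular_X (n := j)).left ?_⟩
  linear_combination h

end MvPolynomial

namespace CuspSurface

variable (k : Type*) [CommRing k]

noncomputable def param : MvPolynomial (Fin 4) k →ₐ[k] MvPolynomial (Fin 2) k :=
  aeval ![(X 0)^2, (X 0)^3, X 1, (X 0) * (X 1)]

noncomputable def relations : Ideal (MvPolynomial (Fin 4) k) :=
  Ideal.span {(X 1)^2 - (X 0)^3, (X 1) * (X 2) - (X 0) * (X 3),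
    (X 3)^2 - (X 0) * (X 2)^2, (X 0)^2 * (X 2) - (X 1) * (X 3)}

variable {k}

theorem relations_le_ker : relations k ≤ RingHom.ker (param k).toRingHom := by
  rw [relations, Ideal.span_le]
  rintro r (rfl | rfl | rfl | rfl) <;>
  · simp [param]
    ring

noncomputable def normalForm (a b c : MvPolynomial (Fin 2) k) : MvPolynomial (Fin 4) k :=
  rename ![0, 2] a + X 1 * rename ![0, 2] b + X 3 * rename ![0, 2] c

theorem exists_normalForm_eq (f : MvPolynomial (Fin 4) k) :
    ∃ a b c, Ideal.Quotient.mk (relations k) f =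
      Ideal.Quotient.mk (relations k) (normalForm a b c) := by
  have mk_eq {p q : MvPolynomial (Fin 4) k} (h : p - q ∈ ({(X 1)^2 - (X 0)^3,
      (X 1) * (X 2) - (X 0) * (X 3), (X 3)^2 - (X 0) * (X 2)^2,
      (X 0)^2 * (X 2) - (X 1) * (X 3)} : Set _)) :
      Ideal.Quotient.mk (relations k) p = Ideal.Quotient.mk (relations k) q :=
    Ideal.Quotient.eq.mpr (Ideal.subset_span h)
  have hyy := mk_eq (p := X 1 ^ 2) (q := X 0 ^ 3) (by simp)
  have hww := mk_eq (p := X 3 ^ 2) (q := X 0 * X 2 ^ 2) (by simp)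
  have hyw := mk_eq (p := X 0 ^ 2 * X 2) (q := X 1 * X 3) (by simp)
  simp only [map_mul, map_pow] at hyy hww hyw
  induction f using MvPolynomial.induction_on with
  | C r => exact ⟨C r, 0, 0, by simp [normalForm]⟩
  | add p q hp hq =>
    obtain ⟨ap, bp, cp, hp⟩ := hp
    obtain ⟨aq, bq, cq, hq⟩ := hq
    refine ⟨ap + aq, bp + bq, cp + cq, ?_⟩
    rw [map_add, hp, hq, ← map_add]
    congr 1
    simp only [normalForm, map_add]
    ring
  | mul_X p i hp =>
    obtain ⟨a, b, c, hp⟩ := hp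
    rw [map_mul, hp]
    fin_cases i
    · refine ⟨X 0 * a, X 0 * b, X 0 * c, ?_⟩
      simp only [normalForm, map_add, map_mul, rename_X, Matrix.cons_val_zero, Fin.zero_eta]
      ring
    · refine ⟨X 0 ^ 3 * b + X 0 ^ 2 * X 1 * c, a, 0, ?_⟩
      simp only [normalForm, map_add, map_mul, map_pow, map_zero, rename_X, Matrix.cons_val_zero,
        Matrix.cons_val_one, Matrix.cons_val_fin_one, Fin.mk_one]
      linear_combination Ideal.Quotient.mk _ (rename ![0, 2] b) * hyy -
        Ideal.Quotient.mk _ (rename ![0, 2] c) * hyw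
    · refine ⟨X 1 * a, X 1 * b, X 1 * c, ?_⟩
      simp only [normalForm, map_add, map_mul, rename_X, Matrix.cons_val_one,
        Matrix.cons_val_fin_one, Fin.reduceFinMk]
      ring
    · refine ⟨X 0 ^ 2 * X 1 * b + X 0 * X 1 ^ 2 * c, 0, a, ?_⟩
      simp only [normalForm, map_add, map_mul, map_pow, map_zero, rename_X, Matrix.cons_val_zero,
        Matrix.cons_val_one, Matrix.cons_val_fin_one, Fin.reduceFinMk]
      linear_combination Ideal.Quotient.mk _ (rename ![0, 2] c) * hww -
        Ideal.Quotient.mk _ (rename ![0, 2] b) * hyw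

theorem param_comp_rename : (param k).comp (rename ![0, 2]) = squareX0 k 1 :=
  algHom_ext fun i ↦ by fin_cases i <;> simp [param, squareX0]

theorem param_normalForm (a b c : MvPolynomial (Fin 2) k) :
    param k (normalForm a b c) = squareX0 k 1 a + X 0 * squareX0 k 1 (X 0 * b + X 1 * c) := by
  simp only [normalForm, map_add, map_mul, ← AlgHom.comp_apply, param_comp_rename]
  simp only [param, squareX0, aeval_X, Function.update_self, Function.update_of_ne one_ne_zero,
    Matrix.cons_val_zero, Matrix.cons_val_one, Matrix.cons_val]
  ring

theorem normalForm_mem_of_param_eq_zero [IsDomain k] {a b c : MvPolynomial (Fin 2) k}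
    (h : param k (normalForm a b c) = 0) : normalForm a b c ∈ relations k := by
  rw [param_normalForm] at h
  obtain ⟨rfl, hbc⟩ := eq_zero_and_eq_zero_of_squareX0_add_X_mul_squareX0 h
  obtain ⟨d, rfl, rfl⟩ := exists_eq_X_mul_of_X_mul_add_X_mul_eq_zero (by decide) hbc
  have : normalForm 0 (X 1 * d) (-(X 0 * d)) = rename ![0, 2] d * (X 1 * X 2 - X 0 * X 3) := by
    simp only [normalForm, map_zero, map_mul, map_neg, rename_X, Matrix.cons_val_zero,
      Matrix.cons_val_one, Matrix.cons_val_fin_one]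
    ring
  rw [this]
  exact Ideal.mul_mem_left _ _ (Ideal.subset_span (by simp))

end CuspSurface

theorem stmt_1 (k : Type*) [Field k] :
    let φ : MvPolynomial (Fin 4) k →ₐ[k] MvPolynomial (Fin 2) k :=
      aeval ![(X 0)^2, (X 0)^3, X 1, (X 0) * (X 1)]
    RingHom.ker φ.toRingHom =
      Ideal.span {(X 1)^2 - (X 0)^3, (X 1) * (X 2) - (X 0) * (X 3),
        (X 3)^2 - (X 0) * (X 2)^2, (X 0)^2 * (X 2) - (X 1) * (X 3)} := by
  change RingHom.ker (CuspSurface.param k).toRingHom = CuspSurface.relations k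
  refine le_antisymm (fun f hf ↦ ?_) CuspSurface.relations_le_ker
  obtain ⟨a, b, c, hfa⟩ := CuspSurface.exists_normalForm_eq f
  rw [Ideal.Quotient.eq] at hfa
  have hnf : CuspSurface.param k (CuspSurface.normalForm a b c) = 0 := by
    have := CuspSurface.relations_le_ker hfa
    rwa [RingHom.mem_ker, map_sub, RingHom.mem_ker.mp hf, zero_sub, neg_eq_zero] at this
  simpa using Ideal.add_mem _ hfa (CuspSurface.normalForm_mem_of_param_eq_zero hnf)
end

section
/- Let k be a field and I the ideal of k[x,y,z,w] generated by y² − x³, yz − xw, w² − xz², and x²z − yw. Then the quotient ring k[x,y,z,w]/I is an integral domain. -/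
open MvPolynomial

namespace Stmt2Aux

variable (k : Type*) [Field k]

/-- the ideal -/
noncomputable def Igen : Ideal (MvPolynomial (Fin 4) k) :=
  Ideal.span {(X 1)^2 - (X 0)^3, (X 1) * (X 2) - (X 0) * (X 3),
    (X 3)^2 - (X 0) * (X 2)^2, (X 0)^2 * (X 2) - (X 1) * (X 3)}

/-- embed k[x] into k[x,y,z,w], x ↦ X 0 -/
noncomputable def θ : Polynomial k →+* MvPolynomial (Fin 4) k :=
  Polynomial.eval₂RingHom MvPolynomial.C (X 0)

/-- embed k[x][z] into k[x,y,z,w], z ↦ X 2 -/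
noncomputable def ψ : Polynomial (Polynomial k) →+* MvPolynomial (Fin 4) k :=
  Polynomial.eval₂RingHom (θ k) (X 2)

/-- the parametrization x ↦ t², y ↦ t³, z ↦ z, w ↦ t z, into k[t][z] -/
noncomputable def φ : MvPolynomial (Fin 4) k →+* Polynomial (Polynomial k) :=
  (MvPolynomial.aeval (R := k) (S₁ := Polynomial (Polynomial k))
    ![Polynomial.C (Polynomial.X^2), Polynomial.C (Polynomial.X^3),
      Polynomial.X, Polynomial.C Polynomial.X * Polynomial.X]).toRingHom

variable {k}

@[simp] lemma θ_C (a : k) : θ k (Polynomial.C a) = MvPolynomial.C a :=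
  Polynomial.eval₂_C _ _

@[simp] lemma θ_X : θ k Polynomial.X = X 0 := Polynomial.eval₂_X _ _

@[simp] lemma ψ_C (p : Polynomial k) : ψ k (Polynomial.C p) = θ k p :=
  Polynomial.eval₂_C _ _

@[simp] lemma ψ_X : ψ k Polynomial.X = X 2 := Polynomial.eval₂_X _ _

@[simp] lemma φ_X0 : φ k (X 0) = Polynomial.C (Polynomial.X^2) := by
  simp [φ]

@[simp] lemma φ_X1 : φ k (X 1) = Polynomial.C (Polynomial.X^3) := by
  simp [φ]

@[simp] lemma φ_X2 : φ k (X 2) = Polynomial.X := by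
  simp [φ]

@[simp] lemma φ_X3 : φ k (X 3) = Polynomial.C Polynomial.X * Polynomial.X := by
  simp [φ]

@[simp] lemma φ_C (a : k) : φ k (MvPolynomial.C a) = Polynomial.C (Polynomial.C a) := by
  simp [φ]

/-- normal form -/
noncomputable def N (A : Polynomial (Polynomial k)) (B : Polynomial k)
    (C : Polynomial (Polynomial k)) : MvPolynomial (Fin 4) k :=
  ψ k A + X 1 * θ k B + X 3 * ψ k C

lemma gen1_mem : (X 1)^2 - (X 0)^3 ∈ Igen k := Ideal.subset_span (by simp)
lemma gen2_mem : (X 1) * (X 2) - (X 0) * (X 3) ∈ Igen k := Ideal.subset_span (by simp)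
lemma gen3_mem : (X 3)^2 - (X 0) * (X 2)^2 ∈ Igen k := Ideal.subset_span (by simp)
lemma gen4_mem : (X 0)^2 * (X 2) - (X 1) * (X 3) ∈ Igen k := Ideal.subset_span (by simp)

/-- every polynomial is congruent mod I to a normal form -/
lemma exists_nf (f : MvPolynomial (Fin 4) k) :
    ∃ A B C, f - N A B C ∈ Igen k := by
  induction f using MvPolynomial.induction_on with
  | C a =>
      refine ⟨Polynomial.C (Polynomial.C a), 0, 0, ?_⟩
      simp [N]
  | add p q hp hq =>
      obtain ⟨A₁, B₁, C₁, h₁⟩ := hp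
      obtain ⟨A₂, B₂, C₂, h₂⟩ := hq
      refine ⟨A₁ + A₂, B₁ + B₂, C₁ + C₂, ?_⟩
      have : p + q - N (A₁ + A₂) (B₁ + B₂) (C₁ + C₂)
          = (p - N A₁ B₁ C₁) + (q - N A₂ B₂ C₂) := by
        simp only [N, map_add]; ring
      rw [this]; exact Ideal.add_mem _ h₁ h₂
  | mul_X f i hf =>
      obtain ⟨A, B, C, h⟩ := hf
      fin_cases i
      · -- multiply by x
        show ∃ A B C, f * X 0 - N A B C ∈ Igen k
        refine ⟨Polynomial.C Polynomial.X * A, Polynomial.X * B,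
          Polynomial.C Polynomial.X * C, ?_⟩
        have : f * X 0 - N (Polynomial.C Polynomial.X * A) (Polynomial.X * B)
            (Polynomial.C Polynomial.X * C) = (f - N A B C) * X 0 := by
          simp only [N, map_mul, ψ_C, ψ_X, θ_X]; ring
        rw [this]; exact Ideal.mul_mem_right _ _ h
      · -- multiply by y
        show ∃ A B C, f * X 1 - N A B C ∈ Igen k
        refine ⟨Polynomial.C (Polynomial.X^3 * B) + Polynomial.C (Polynomial.X^2) * Polynomial.X * C,
          A.coeff 0, Polynomial.C Polynomial.X * A.divX, ?_⟩
        have hA : ψ k A = ψ k A.divX * X 2 + θ k (A.coeff 0) := by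
          conv_lhs => rw [← A.divX_mul_X_add]
          simp only [map_add, map_mul, ψ_X, ψ_C]
        have : f * X 1 - N (Polynomial.C (Polynomial.X^3 * B)
              + Polynomial.C (Polynomial.X^2) * Polynomial.X * C) (A.coeff 0)
              (Polynomial.C Polynomial.X * A.divX)
            = (f - N A B C) * X 1
              + (((X 1) * (X 2) - (X 0) * (X 3)) * ψ k A.divX
                + ((X 1)^2 - (X 0)^3) * θ k B
                + (-1 : MvPolynomial (Fin 4) k) * (((X 0)^2 * (X 2) - (X 1) * (X 3)) * ψ k C)) := by
          simp only [N, hA, map_add, map_mul, map_pow, ψ_C, ψ_X, θ_X]; ring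
        rw [this]
        refine Ideal.add_mem _ (Ideal.mul_mem_right _ _ h) ?_
        refine Ideal.add_mem _ (Ideal.add_mem _ ?_ ?_) ?_
        · exact Ideal.mul_mem_right _ _ gen2_mem
        · exact Ideal.mul_mem_right _ _ gen1_mem
        · exact Ideal.mul_mem_left _ _ (Ideal.mul_mem_right _ _ gen4_mem)
      · -- multiply by z
        show ∃ A B C, f * X 2 - N A B C ∈ Igen k
        refine ⟨Polynomial.X * A, 0,
          Polynomial.C (Polynomial.X * B) + Polynomial.X * C, ?_⟩
        have : f * X 2 - N (Polynomial.X * A) 0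
              (Polynomial.C (Polynomial.X * B) + Polynomial.X * C)
            = (f - N A B C) * X 2
              + ((X 1) * (X 2) - (X 0) * (X 3)) * θ k B := by
          simp only [N, map_add, map_mul, map_zero, ψ_C, ψ_X, θ_X]; ring
        rw [this]
        exact Ideal.add_mem _ (Ideal.mul_mem_right _ _ h)
          (Ideal.mul_mem_right _ _ gen2_mem)
      · -- multiply by w
        show ∃ A B C, f * X 3 - N A B C ∈ Igen k
        refine ⟨Polynomial.X * Polynomial.C (Polynomial.X^2 * B)
            + Polynomial.C Polynomial.X * Polynomial.X^2 * C, 0, A, ?_⟩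
        have : f * X 3 - N (Polynomial.X * Polynomial.C (Polynomial.X^2 * B)
              + Polynomial.C Polynomial.X * Polynomial.X^2 * C) 0 A
            = (f - N A B C) * X 3
              + ((-1 : MvPolynomial (Fin 4) k) * (((X 0)^2 * (X 2) - (X 1) * (X 3)) * θ k B)
                + ((X 3)^2 - (X 0) * (X 2)^2) * ψ k C) := by
          simp only [N, map_add, map_mul, map_pow, map_zero, ψ_C, ψ_X, θ_X]; ring
        rw [this]
        refine Ideal.add_mem _ (Ideal.mul_mem_right _ _ h) (Ideal.add_mem _ ?_ ?_)
        · exact Ideal.mul_mem_left _ _ (Ideal.mul_mem_right _ _ gen4_mem)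
        · exact Ideal.mul_mem_right _ _ gen3_mem

lemma φ_θ (p : Polynomial k) :
    φ k (θ k p) = Polynomial.C (Polynomial.expand k 2 p) := by
  have : (φ k).comp (θ k)
      = (Polynomial.C : Polynomial k →+* Polynomial (Polynomial k)).comp
        (Polynomial.expand k 2 : Polynomial k →ₐ[k] Polynomial k).toRingHom := by
    apply Polynomial.ringHom_ext
    · intro a; simp [Polynomial.expand_C]
    · simp [Polynomial.expand_X]
  exact DFunLike.congr_fun this p

lemma φ_ψ (p : Polynomial (Polynomial k)) :
    φ k (ψ k p)
      = Polynomial.map (Polynomial.expand k 2 : Polynomial k →ₐ[k] Polynomial k).toRingHom p := by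
  have : (φ k).comp (ψ k)
      = Polynomial.mapRingHom (Polynomial.expand k 2 : Polynomial k →ₐ[k] Polynomial k).toRingHom := by
    apply Polynomial.ringHom_ext
    · intro a; simp [φ_θ]
    · simp
  exact DFunLike.congr_fun this p

/-- key parity lemma -/
lemma parity_zero (a b : Polynomial k) (m : ℕ) (hm : ¬ 2 ∣ m)
    (h : Polynomial.expand k 2 a + Polynomial.X ^ m * Polynomial.expand k 2 b = 0) :
    a = 0 ∧ b = 0 := by
  have ha : a = 0 := by
    ext n
    have := congrArg (fun p => Polynomial.coeff p (2 * n)) h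
    simp only [Polynomial.coeff_add, Polynomial.coeff_zero] at this
    rw [Polynomial.coeff_expand (by norm_num)] at this
    rw [if_pos ⟨n, rfl⟩, Nat.mul_div_cancel_left _ (by norm_num)] at this
    rw [mul_comm, Polynomial.coeff_mul_X_pow'] at this
    by_cases hle : m ≤ 2 * n
    · rw [if_pos hle, Polynomial.coeff_expand (by norm_num), if_neg] at this
      · simpa using this
      · intro hdvd
        apply hm
        have h2 := Nat.dvd_sub (⟨n, rfl⟩ : 2 ∣ 2 * n) hdvd
        rwa [Nat.sub_sub_self hle] at h2
    · rw [if_neg hle] at this; simpa using this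
  subst ha
  simp only [map_zero, zero_add] at h
  have hb : Polynomial.expand k 2 b = 0 := by
    have hX : (Polynomial.X : Polynomial k) ^ m ≠ 0 := pow_ne_zero _ Polynomial.X_ne_zero
    exact (mul_eq_zero.mp h).resolve_left hX
  exact ⟨rfl, Polynomial.expand_injective (n := 2) (by norm_num) (by simpa using hb)⟩

lemma nf_eq_zero (A : Polynomial (Polynomial k)) (B : Polynomial k)
    (C : Polynomial (Polynomial k)) (h : φ k (N A B C) = 0) :
    A = 0 ∧ B = 0 ∧ C = 0 := by
  rw [N, map_add, map_add, map_mul, map_mul, φ_ψ, φ_ψ, φ_θ, φ_X1, φ_X3] at h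
  set eR := (Polynomial.expand k 2 : Polynomial k →ₐ[k] Polynomial k).toRingHom with heR
  have h' : Polynomial.map eR A + Polynomial.C (Polynomial.X ^ 3 * eR B)
      + Polynomial.C Polynomial.X * (Polynomial.X * Polynomial.map eR C) = 0 := by
    rw [← h, Polynomial.C_mul]
    ring_nf
    rfl
  have heRapp : ∀ p : Polynomial k, eR p = Polynomial.expand k 2 p := fun p => rfl
  have h0 : Polynomial.expand k 2 (A.coeff 0)
      + Polynomial.X ^ 3 * Polynomial.expand k 2 B = 0 := by
    have := congrArg (fun p => Polynomial.coeff p 0) h'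
    simp only [Polynomial.coeff_add, Polynomial.coeff_zero, Polynomial.coeff_map,
      Polynomial.coeff_C_zero, Polynomial.coeff_C_mul, Polynomial.mul_coeff_zero,
      Polynomial.coeff_X_zero, zero_mul, mul_zero, add_zero] at this
    exact this
  have h1 : ∀ n, Polynomial.expand k 2 (A.coeff (n + 1))
      + Polynomial.X ^ 1 * Polynomial.expand k 2 (C.coeff n) = 0 := by
    intro n
    have := congrArg (fun p => Polynomial.coeff p (n + 1)) h'
    simp only [Polynomial.coeff_add, Polynomial.coeff_zero, Polynomial.coeff_map,
      Polynomial.coeff_C, Polynomial.coeff_C_mul, Polynomial.coeff_X_mul] at this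
    rw [pow_one]
    simpa [heRapp] using this
  obtain ⟨hA0, hB⟩ := parity_zero _ _ 3 (by norm_num) h0
  have hAC : ∀ n, A.coeff (n + 1) = 0 ∧ C.coeff n = 0 := fun n =>
    parity_zero _ _ 1 (by norm_num) (h1 n)
  refine ⟨?_, hB, ?_⟩
  · refine Polynomial.ext fun n => ?_
    cases n with
    | zero => simpa using hA0
    | succ n => simpa using (hAC n).1
  · refine Polynomial.ext fun n => ?_
    simpa using (hAC n).2

lemma Igen_le_ker : Igen k ≤ RingHom.ker (φ k) := by
  rw [Igen, Ideal.span_le]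
  rintro g hg
  simp only [Set.mem_insert_iff, Set.mem_singleton_iff] at hg
  rcases hg with rfl | rfl | rfl | rfl <;>
    · rw [SetLike.mem_coe, RingHom.mem_ker]
      simp only [map_sub, map_mul, map_pow, φ_X0, φ_X1, φ_X2, φ_X3, Polynomial.C_pow]
      ring

lemma ker_le_Igen : RingHom.ker (φ k) ≤ Igen k := by
  intro f hf
  obtain ⟨A, B, C, hN⟩ := exists_nf f
  have hφN : φ k (N A B C) = 0 := by
    have h1 : φ k (f - N A B C) = 0 := Igen_le_ker hN
    rw [map_sub, RingHom.mem_ker.mp hf, zero_sub, neg_eq_zero] at h1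
    exact h1
  obtain ⟨hA, hB, hC⟩ := nf_eq_zero A B C hφN
  have hN0 : N A B C = 0 := by simp [N, hA, hB, hC]
  rwa [hN0, sub_zero] at hN

lemma Igen_eq_ker : Igen k = RingHom.ker (φ k) :=
  le_antisymm Igen_le_ker ker_le_Igen

end Stmt2Aux

theorem stmt_2 (k : Type*) [Field k] :
    let I : Ideal (MvPolynomial (Fin 4) k) :=
      Ideal.span {(X 1)^2 - (X 0)^3, (X 1) * (X 2) - (X 0) * (X 3),
        (X 3)^2 - (X 0) * (X 2)^2, (X 0)^2 * (X 2) - (X 1) * (X 3)}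
    IsDomain (MvPolynomial (Fin 4) k ⧸ I) := by
  intro I
  have hI : I = RingHom.ker (Stmt2Aux.φ k) := Stmt2Aux.Igen_eq_ker
  rw [hI]
  exact (RingHom.kerLift_injective (Stmt2Aux.φ k)).isDomain _
end

section
/- Let k be a field, n ≥ 1, and let S ⊆ kⁿ be the common zero set of a family of polynomials f_i ∈ k[x₁,…,xₙ]. If S is a k-linear subspace of kⁿ and k is infinite, then S is contained in the kernel of the linear map J : kⁿ → k^s given by J(v)_i = Σ_j (∂f_i/∂x_j)(0) · v_j. -/
open MvPolynomial


lemma nat_sum_one {ι} [Fintype ι] [DecidableEq ι] (f : ι → ℕ) (h : ∑ i, f i = 1) :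
    ∃ i, f i = 1 ∧ ∀ j, j ≠ i → f j = 0 := by
  have h0 : ∃ i ∈ Finset.univ, f i ≠ 0 := by
    by_contra hc
    push_neg at hc
    rw [Finset.sum_eq_zero (fun i hi => hc i hi)] at h
    simp at h
  obtain ⟨i, -, hi⟩ := h0
  have hle : f i ≤ 1 := h ▸ Finset.single_le_sum (f := f) (fun _ _ => Nat.zero_le _) (Finset.mem_univ i)
  have hfi : f i = 1 := le_antisymm hle (Nat.one_le_iff_ne_zero.2 hi)
  refine ⟨i, hfi, fun j hj => ?_⟩
  have hsd : ∑ x ∈ Finset.univ \ {i}, f x + ∑ x ∈ ({i} : Finset ι), f x = ∑ x, f x :=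
    Finset.sum_sdiff (Finset.singleton_subset_iff.2 (Finset.mem_univ i))
  rw [h, Finset.sum_singleton, hfi] at hsd
  have hz : ∑ x ∈ Finset.univ \ {i}, f x = 0 := by omega
  exact (Finset.sum_eq_zero_iff.1 hz) j (by simp [hj])

lemma coeff_one_line {k : Type*} [CommRing k] {n : ℕ} (v : Fin n → k) (p : MvPolynomial (Fin n) k) :
    Polynomial.coeff (aeval (fun j => Polynomial.C (v j) * Polynomial.X) p) 1
      = ∑ j : Fin n, eval (0 : Fin n → k) (pderiv j p) * v j := by
  induction p using MvPolynomial.induction_on' with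
  | add p q hp hq => simp [map_add, hp, hq, Finset.sum_add_distrib, add_mul]
  | monomial u a =>
      have hprod : (Finsupp.prod u fun j e => (Polynomial.C (v j) * Polynomial.X) ^ e)
          = Polynomial.C (∏ j : Fin n, v j ^ u j) * Polynomial.X ^ (∑ j : Fin n, u j) := by
        rw [Finsupp.prod_fintype _ _ (by simp)]
        simp_rw [mul_pow, ← Polynomial.C_pow]
        rw [Finset.prod_mul_distrib, Finset.prod_pow_eq_pow_sum, ← map_prod]
      simp only [aeval_monomial, pderiv_monomial, Polynomial.algebraMap_eq, hprod,
        ← Polynomial.C_mul, Polynomial.coeff_C_mul, Polynomial.coeff_X_pow]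
      by_cases hc : ∑ j : Fin n, u j = 1
      · obtain ⟨i, hi1, hi0⟩ := nat_sum_one (fun j => u j) hc
        have hu : u = Finsupp.single i 1 := Finsupp.ext fun j => by
          rcases eq_or_ne j i with rfl | h
          · simpa using hi1
          · simp [Finsupp.single_apply, Ne.symm h, hi0 j h]
        rw [if_pos hc.symm, hu]
        rw [Finset.sum_eq_single i]
        · simp [Finsupp.single_apply, Finset.prod_ite_eq']
        · intro x _ hx
          have : Finsupp.single i 1 x = 0 := by simp [Finsupp.single_apply, hx.symm]
          simp [this]
        · simp
      · rw [if_neg (fun h => hc h.symm), mul_zero, mul_zero, eq_comm]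
        refine Finset.sum_eq_zero fun x _ => ?_
        rcases Nat.eq_zero_or_pos (u x) with hx | hx
        · simp [hx]
        · have hd : u - Finsupp.single x 1 ≠ 0 := by
            intro h0
            apply hc
            have hle : ∀ j, u j ≤ Finsupp.single x 1 j := fun j => by
              have := DFunLike.congr_fun h0 j
              simp [Finsupp.tsub_apply] at this
              omega
            have hx1 : u x = 1 := le_antisymm (by simpa using hle x) hx
            rw [Finset.sum_eq_single x (fun j _ hj => by have := hle j; simp [Finsupp.single_apply, Ne.symm hj] at this; exact this)
              (by simp)]
            exact hx1
          rw [eval_monomial]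
          obtain ⟨j, hj⟩ := Finsupp.ne_iff.1 hd
          rw [Finsupp.prod, Finset.prod_eq_zero (Finsupp.mem_support_iff.2 (by simpa using hj))]
          · ring
          · simp only [Pi.zero_apply]
            exact zero_pow (by simpa using hj)

lemma eval_line {k : Type*} [CommRing k] {n : ℕ} (v : Fin n → k) (p : MvPolynomial (Fin n) k) (t : k) :
    Polynomial.eval t (aeval (fun j => Polynomial.C (v j) * Polynomial.X) p) = eval (t • v) p := by
  induction p using MvPolynomial.induction_on with
  | C a => simp
  | add p q hp hq => simp [hp, hq]
  | mul_X p j hp => simp [hp]; ring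

theorem stmt_12 (k : Type*) [Field k] [Infinite k] (n s : ℕ) (hn : 1 ≤ n)
    (f : Fin s → MvPolynomial (Fin n) k)
    (S : Set (Fin n → k)) (hS : S = {v | ∀ i, eval v (f i) = 0})
    (hsub : ∃ W : Submodule k (Fin n → k), (W : Set (Fin n → k)) = S) :
    ∀ v ∈ S, ∀ i : Fin s, ∑ j : Fin n, eval (0 : Fin n → k) (pderiv j (f i)) * v j = 0 := by
  intro v hv i
  obtain ⟨W, hW⟩ := hsub
  have hvW : v ∈ W := by rw [← hW] at hv; exact hv
  set g : Polynomial k := aeval (fun j => Polynomial.C (v j) * Polynomial.X) (f i) with hg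
  have hroot : ∀ t : k, g.eval t = 0 := by
    intro t
    have htv : t • v ∈ S := by rw [← hW]; exact W.smul_mem t hvW
    rw [hS] at htv
    rw [hg, eval_line]
    exact htv i
  have hg0 : g = 0 := Polynomial.funext (by simpa using hroot)
  have := coeff_one_line v (f i)
  rw [← hg, hg0] at this
  simpa using this.symm
end
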